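/- Let σ: ℝ → ℝ be the ReLU activation σ(x) = max{x,0}. Then for any R ∈ ℕ and any a ≥ 1 there exists a feedforward ReLU network f̂_{sq} ∈ F(R,9) whose weight vector satisfies ‖v_{f̂_{sq}}‖_∞ = ‖(v_{f̂_{sq}})^{(R)}‖_∞ ≤ 4·a² and ‖(v_{f̂_{sq}})^{(0)}‖_∞ ≤ 1, such that |f̂_{sq}(x) − x²| ≤ a²·4^{−R} for all x ∈ [−a,a]. -/

import Mathlib

/-!
Yarotsky's construction. With the hat function `g = 2σ(y) - 4σ(y - 1/2) + 2σ(y - 1)` and its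
iterates `g_s`, the partial sums `f_m(y) = y - ∑_{s ≤ m} g_s(y) / 4^s` satisfy
`f_m(y) - y² = (g_m(y) - g_m(y)²) / 4^m` on `[0, 1]`, so `0 ≤ f_m(y) - y² ≤ 4^{-(m+1)}`.

The network first computes `σ(x/a) + σ(-x/a) = |x|/a =: y`. Every later hidden layer holds the
eight ReLU pieces `σ(g_k(y) - t)`, `t ∈ {0, 0, 1/2, 1/2, 1/2, 1/2, 1, 1}`, of the next hat, and
in neuron 9 the partial sum `f_k(y) ≥ 0`; the knots are repeated so that the coefficients
`2, -4, 2` become sums of weights `±1`. The output is `a² f_{R-1}(y)`, so weights of size `a²`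
occur only in the last layer.
-/

open Finset

noncomputable section

/-- Output `g_i^{(l)}(x)` of neuron `i` in layer `l` of a feedforward ReLU network with
input dimension `d` (coordinates `x 1, …, x d`), `r` neurons per hidden layer and
weights `v l i j = v_{i,j}^{(l)}`. -/
def fnnNeuron (d r : ℕ) (v : ℕ → ℕ → ℕ → ℝ) (x : ℕ → ℝ) : ℕ → ℕ → ℝ
  | 0, j => x j
  | (l + 1), i =>
      max 0 (v l i 0 +
        ∑ j ∈ Finset.Icc 1 (if l = 0 then d else r), v l i j * fnnNeuron d r v x l j)

/-- Output of the feedforward ReLU network with `L` hidden layers of `r` neurons each,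
input dimension `d` and weight vector `v` (the class `F(L,r)`). -/
def fnnEval (d r L : ℕ) (v : ℕ → ℕ → ℕ → ℝ) (x : ℕ → ℝ) : ℝ :=
  v L 1 0 + ∑ i ∈ Finset.Icc 1 r, v L 1 i * fnnNeuron d r v x L i

/-- The indices `(l, i, j)` of the weights `v_{i,j}^{(l)}` actually used by a network
in `F(L,r)` with input dimension `d`. -/
def RelW (d r L : ℕ) (l i j : ℕ) : Prop :=
  (l < L ∧ 1 ≤ i ∧ i ≤ r ∧ j ≤ (if l = 0 then d else r)) ∨
    (l = L ∧ i = 1 ∧ j ≤ (if L = 0 then d else r))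

/-- Supremum of `|v l i j|` over all indices satisfying the predicate `Pred`
(e.g. the supremum norm of (part of) a weight vector). -/
def wsup (Pred : ℕ → ℕ → ℕ → Prop) (v : ℕ → ℕ → ℕ → ℝ) : ℝ :=
  sSup {y : ℝ | ∃ l i j, Pred l i j ∧ y = |v l i j|}

def hat (y : ℝ) : ℝ := 2 * max 0 y - 4 * max 0 (y - 1 / 2) + 2 * max 0 (y - 1)

def sqApprox (m : ℕ) (y : ℝ) : ℝ := y - ∑ s ∈ Icc 1 m, hat^[s] y / 4 ^ s

lemma hat_of_le_half {y : ℝ} (h0 : 0 ≤ y) (h : y ≤ 1 / 2) : hat y = 2 * y := by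
  rw [hat, max_eq_right h0, max_eq_left (by linarith), max_eq_left (by linarith)]
  ring

lemma hat_of_half_le {y : ℝ} (h : 1 / 2 ≤ y) (h1 : y ≤ 1) : hat y = 2 - 2 * y := by
  rw [hat, max_eq_right (by linarith), max_eq_right (by linarith), max_eq_left (by linarith)]
  ring

lemma mapsTo_hat : Set.MapsTo hat (Set.Icc 0 1) (Set.Icc 0 1) := by
  rintro y ⟨h0, h1⟩
  rcases le_total y (1 / 2) with h | h
  · rw [hat_of_le_half h0 h]; constructor <;> linarith
  · rw [hat_of_half_le h h1]; constructor <;> linarith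

lemma two_mul_hat_sub_hat_sq {y : ℝ} (hy : y ∈ Set.Icc (0 : ℝ) 1) :
    2 * hat y - hat y ^ 2 = 4 * (y - y ^ 2) := by
  rcases le_total y (1 / 2) with h | h
  · rw [hat_of_le_half hy.1 h]; ring
  · rw [hat_of_half_le h hy.2]; ring

lemma sqApprox_succ (m : ℕ) (y : ℝ) :
    sqApprox (m + 1) y = sqApprox m y - hat^[m + 1] y / 4 ^ (m + 1) := by
  rw [sqApprox, sqApprox, sum_Icc_succ_top (by omega)]
  ring

lemma sqApprox_sub_sq {y : ℝ} (hy : y ∈ Set.Icc (0 : ℝ) 1) (m : ℕ) :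
    sqApprox m y - y ^ 2 = (hat^[m] y - (hat^[m] y) ^ 2) / 4 ^ m := by
  induction m with
  | zero => simp [sqApprox]
  | succ m ih =>
    have h := two_mul_hat_sub_hat_sq (mapsTo_hat.iterate m hy)
    rw [sqApprox_succ, sub_right_comm, ih, Function.iterate_succ_apply']
    field_simp
    linear_combination -(4 : ℝ) ^ m * h

lemma sqApprox_sub_sq_mem_Icc {y : ℝ} (hy : y ∈ Set.Icc (0 : ℝ) 1) (m : ℕ) :
    sqApprox m y - y ^ 2 ∈ Set.Icc 0 ((4 : ℝ) ^ (-(m + 1 : ℤ))) := by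
  obtain ⟨h0, h1⟩ := mapsTo_hat.iterate m hy
  have h4 : (4 : ℝ) ^ (-(m + 1 : ℤ)) = 1 / 4 / 4 ^ m := by
    rw [zpow_neg, ← Nat.cast_succ, zpow_natCast, pow_succ]
    field_simp
  rw [sqApprox_sub_sq hy, h4]
  constructor
  · have : 0 ≤ hat^[m] y - (hat^[m] y) ^ 2 := by nlinarith
    positivity
  · gcongr
    nlinarith [sq_nonneg (hat^[m] y - 1 / 2)]

lemma sqApprox_nonneg {y : ℝ} (hy : y ∈ Set.Icc (0 : ℝ) 1) (m : ℕ) : 0 ≤ sqApprox m y := by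
  nlinarith [(sqApprox_sub_sq_mem_Icc hy m).1]

def fnnPreact (d r : ℕ) (v : ℕ → ℕ → ℕ → ℝ) (x : ℕ → ℝ) (l i : ℕ) : ℝ :=
  v l i 0 + ∑ j ∈ Icc 1 (if l = 0 then d else r), v l i j * fnnNeuron d r v x l j

lemma fnnNeuron_succ (d r : ℕ) (v : ℕ → ℕ → ℕ → ℝ) (x : ℕ → ℝ) (l i : ℕ) :
    fnnNeuron d r v x (l + 1) i = max 0 (fnnPreact d r v x l i) := rfl

lemma fnnNeuron_congr {d r : ℕ} {v w : ℕ → ℕ → ℕ → ℝ} (x : ℕ → ℝ) {l : ℕ}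
    (h : ∀ k < l, v k = w k) : fnnNeuron d r v x l = fnnNeuron d r w x l := by
  induction l with
  | zero => rfl
  | succ l ih =>
    funext i
    rw [fnnNeuron_succ, fnnNeuron_succ, fnnPreact, fnnPreact, h l l.lt_succ_self,
      ih fun k hk => h k (hk.trans l.lt_succ_self)]

lemma fnnEval_eq_mul_fnnPreact {d r L : ℕ} {v w : ℕ → ℕ → ℕ → ℝ} (x : ℕ → ℝ) (c : ℝ) (i : ℕ)
    (hL : L ≠ 0) (hlow : ∀ k < L, v k = w k) (hout : ∀ j, v L 1 j = c * w L i j) :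
    fnnEval d r L v x = c * fnnPreact d r w x L i := by
  rw [fnnEval, fnnPreact, fnnNeuron_congr x hlow, if_neg hL, mul_add, mul_sum]
  simp only [hout, mul_assoc]

lemma wsup_eq_of_forall_le {P : ℕ → ℕ → ℕ → Prop} {v : ℕ → ℕ → ℕ → ℝ} {M : ℝ}
    (hle : ∀ l i j, P l i j → |v l i j| ≤ M) (hmem : ∃ l i j, P l i j ∧ |v l i j| = M) :
    wsup P v = M := by
  obtain ⟨l, i, j, hP, hM⟩ := hmem
  refine IsGreatest.csSup_eq ⟨⟨l, i, j, hP, hM.symm⟩, ?_⟩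
  rintro _ ⟨l, i, j, hP, rfl⟩
  exact hle l i j hP

lemma wsup_le {P : ℕ → ℕ → ℕ → Prop} {v : ℕ → ℕ → ℕ → ℝ} {M : ℝ} (hM : 0 ≤ M)
    (hle : ∀ l i j, P l i j → |v l i j| ≤ M) : wsup P v ≤ M := by
  refine Real.sSup_le ?_ hM
  rintro _ ⟨l, i, j, hP, rfl⟩
  exact hle l i j hP

def knot (j : ℕ) : ℝ :=
  if j = 3 ∨ j = 4 ∨ j = 5 ∨ j = 6 then 1 / 2 else if j = 7 ∨ j = 8 then 1 else 0

def hatSign (j : ℕ) : ℝ :=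
  if j = 1 ∨ j = 2 ∨ j = 7 ∨ j = 8 then 1 else if j = 3 ∨ j = 4 ∨ j = 5 ∨ j = 6 then -1 else 0

lemma sum_hatSign_mul_relu (G : ℝ) :
    ∑ j ∈ Icc 1 8, hatSign j * max 0 (G - knot j) = hat G := by
  simp [sum_Icc_succ_top, hatSign, knot, hat]
  ring

def hatState (G F : ℝ) (j : ℕ) : ℝ := if j = 9 then F else max 0 (G - knot j)

def inputLayer (a : ℝ) (i j : ℕ) : ℝ :=
  if j = 1 then (if i = 1 then a⁻¹ else if i = 2 then -a⁻¹ else 0) else 0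

def absLayer (i j : ℕ) : ℝ := if j = 0 then -knot i else if j = 1 ∨ j = 2 then 1 else 0

def hatLayer (l i j : ℕ) : ℝ :=
  if i = 9 then (if j = 9 then 1 else -(hatSign j / 4 ^ (l - 1)))
  else if j = 0 then -knot i else hatSign j

def sqLayer (a : ℝ) (l i j : ℕ) : ℝ :=
  if l = 0 then inputLayer a i j else if l = 1 then absLayer i j else hatLayer l i j

def sqNet (R : ℕ) (a : ℝ) (l i j : ℕ) : ℝ :=
  if l = R then a ^ 2 * sqLayer a R 9 j else sqLayer a l i j

lemma hatLayer_affine (l i : ℕ) (G F : ℝ) :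
    hatLayer l i 0 + ∑ j ∈ Icc 1 9, hatLayer l i j * hatState G F j =
      if i = 9 then F - hat G / 4 ^ (l - 1) else hat G - knot i := by
  rw [sum_Icc_succ_top (by norm_num : 1 ≤ 8 + 1)]
  have hj : ∀ j ∈ Icc 1 8, j ≠ 0 ∧ j ≠ 9 := fun j hj => by simp only [mem_Icc] at hj; omega
  by_cases hi : i = 9
  · have hterm : ∀ j ∈ Icc 1 8, hatLayer l i j * hatState G F j =
        -(hatSign j * max 0 (G - knot j)) / 4 ^ (l - 1) := fun j hj' => by
      simp only [hatLayer, hatState, hi, (hj j hj').2, if_true, if_false]; ring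
    rw [sum_congr rfl hterm, ← sum_div, sum_neg_distrib, sum_hatSign_mul_relu]
    simp only [hatLayer, hatState, hatSign, hi, ↓reduceIte, Nat.reduceAdd, zero_ne_one,
      OfNat.zero_ne_ofNat, or_self, zero_div, neg_zero, one_mul, zero_add]
    ring
  · have hterm : ∀ j ∈ Icc 1 8, hatLayer l i j * hatState G F j =
        hatSign j * max 0 (G - knot j) := fun j hj' => by
      simp only [hatLayer, hatState, hi, (hj j hj').1, (hj j hj').2, if_false]
    rw [sum_congr rfl hterm, sum_hatSign_mul_relu]
    simp only [hatLayer, hatState, hatSign, hi, ↓reduceIte, Nat.reduceAdd, OfNat.ofNat_ne_zero,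
      OfNat.ofNat_ne_one, Nat.reduceEqDiff, or_self, zero_mul, add_zero]
    ring

lemma absLayer_affine (i : ℕ) (u : ℕ → ℝ) :
    absLayer i 0 + ∑ j ∈ Icc 1 9, absLayer i j * u j = u 1 + u 2 - knot i := by
  simp [sum_Icc_succ_top, absLayer]
  ring

lemma fnnPreact_sqLayer {a : ℝ} (ha : 0 < a) {x : ℕ → ℝ} (hx : |x 1| ≤ a) (k i : ℕ) :
    fnnPreact 1 9 (sqLayer a) x (k + 1) i =
      if i = 9 then sqApprox k (|x 1| / a) else hat^[k] (|x 1| / a) - knot i := by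
  have hy : |x 1| / a ∈ Set.Icc (0 : ℝ) 1 := ⟨by positivity, (div_le_one ha).2 hx⟩
  induction k generalizing i with
  | zero =>
    have habs : fnnNeuron 1 9 (sqLayer a) x 1 1 + fnnNeuron 1 9 (sqLayer a) x 1 2 = |x 1| / a := by
      have hinput : fnnNeuron 1 9 (sqLayer a) x 0 1 = x 1 := rfl
      norm_num [fnnNeuron_succ, fnnPreact, sqLayer, inputLayer]
      rw [hinput, max_comm 0, max_comm 0, max_zero_add_max_neg_zero_eq_abs_self, abs_mul,
        abs_inv, abs_of_pos ha, inv_mul_eq_div]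
    rw [fnnPreact]
    simp only [zero_add, one_ne_zero, if_false, if_true, sqLayer]
    rw [absLayer_affine, habs]
    split_ifs with hi
    · simp [hi, sqApprox, knot]
    · rfl
  | succ k ih =>
    have hstate : fnnNeuron 1 9 (sqLayer a) x (k + 1 + 1) =
        hatState (hat^[k] (|x 1| / a)) (sqApprox k (|x 1| / a)) := by
      funext j
      rw [fnnNeuron_succ, ih, hatState]
      split_ifs
      · exact max_eq_right (sqApprox_nonneg hy k)
      · rfl
    rw [fnnPreact, hstate]
    have hk : k + 1 + 1 ≠ 1 := by omega
    simp only [sqLayer, hk, Nat.add_eq_zero_iff, one_ne_zero, and_false, if_false]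
    rw [hatLayer_affine, sqApprox_succ, Function.iterate_succ_apply']
    rfl

lemma fnnEval_sqNet {R : ℕ} (hR : R ≠ 0) {a : ℝ} (ha : 0 < a) {x : ℕ → ℝ} (hx : |x 1| ≤ a) :
    fnnEval 1 9 R (sqNet R a) x = a ^ 2 * sqApprox (R - 1) (|x 1| / a) := by
  obtain ⟨k, rfl⟩ := Nat.exists_eq_succ_of_ne_zero hR
  rw [fnnEval_eq_mul_fnnPreact x (a ^ 2) 9 hR (fun l hl => ?_) (fun j => ?_),
    fnnPreact_sqLayer ha hx]
  · simp
  · funext i j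
    simp [sqNet, hl.ne]
  · simp [sqNet]

lemma abs_knot_le_one (j : ℕ) : |knot j| ≤ 1 := by
  unfold knot
  split_ifs <;> norm_num

lemma abs_hatSign_le_one (j : ℕ) : |hatSign j| ≤ 1 := by
  unfold hatSign
  split_ifs <;> norm_num

lemma abs_sqLayer_le_one {a : ℝ} (ha : 1 ≤ a) (l i j : ℕ) : |sqLayer a l i j| ≤ 1 := by
  have hinv : |a⁻¹| ≤ 1 := by
    rw [abs_inv, abs_of_pos (by positivity)]
    exact inv_le_one_of_one_le₀ ha
  have hpow : |hatSign j / 4 ^ (l - 1)| ≤ 1 := by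
    rw [abs_div, abs_of_pos (by positivity : (0 : ℝ) < 4 ^ (l - 1)), div_le_one (by positivity)]
    exact (abs_hatSign_le_one j).trans (one_le_pow₀ (by norm_num))
  unfold sqLayer inputLayer absLayer hatLayer
  split_ifs <;> simp only [abs_neg, abs_one, abs_zero, zero_le_one, le_refl, hinv, hpow,
    abs_knot_le_one, abs_hatSign_le_one]

lemma abs_sqNet_le {a : ℝ} (ha : 1 ≤ a) (R l i j : ℕ) : |sqNet R a l i j| ≤ a ^ 2 := by
  have h1 : (1 : ℝ) ≤ a ^ 2 := one_le_pow₀ ha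
  unfold sqNet
  split_ifs
  · rw [abs_mul, abs_of_nonneg (by positivity)]
    exact mul_le_of_le_one_right (by positivity) (abs_sqLayer_le_one ha R 9 j)
  · exact (abs_sqLayer_le_one ha l i j).trans h1

lemma exists_abs_sqLayer_eq_one (a : ℝ) {R : ℕ} (hR : R ≠ 0) :
    ∃ j ≤ 9, |sqLayer a R 9 j| = 1 := by
  rcases eq_or_ne R 1 with rfl | hR1
  · exact ⟨1, by norm_num, by simp [sqLayer, absLayer]⟩
  · exact ⟨9, le_rfl, by simp [sqLayer, hatLayer, hR, hR1]⟩

lemma wsup_sqNet {R : ℕ} (hR : R ≠ 0) {a : ℝ} (ha : 1 ≤ a) {P : ℕ → ℕ → ℕ → Prop}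
    (hP : ∀ j ≤ 9, P R 1 j) : wsup P (sqNet R a) = a ^ 2 := by
  obtain ⟨j, hj, hj1⟩ := exists_abs_sqLayer_eq_one a hR
  refine wsup_eq_of_forall_le (fun l i j _ => abs_sqNet_le ha R l i j) ⟨R, 1, j, hP j hj, ?_⟩
  simp [sqNet, abs_mul, hj1]

lemma abs_fnnEval_sqNet_sub_sq_le {R : ℕ} (hR : R ≠ 0) {a x : ℝ} (ha : 0 < a) (hx : |x| ≤ a) :
    |fnnEval 1 9 R (sqNet R a) (fun j => if j = 1 then x else 0) - x ^ 2|
      ≤ a ^ 2 * (4 : ℝ) ^ (-(R : ℤ)) := by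
  obtain ⟨hlow, hhigh⟩ := sqApprox_sub_sq_mem_Icc
    (⟨by positivity, (div_le_one ha).2 hx⟩ : |x| / a ∈ Set.Icc (0 : ℝ) 1) (R - 1)
  rw [show ((R - 1 : ℕ) : ℤ) + 1 = R by omega] at hhigh
  have hsq : x ^ 2 = a ^ 2 * (|x| / a) ^ 2 := by
    rw [div_pow, sq_abs]
    field_simp
  calc |fnnEval 1 9 R (sqNet R a) (fun j => if j = 1 then x else 0) - x ^ 2|
      = a ^ 2 * (sqApprox (R - 1) (|x| / a) - (|x| / a) ^ 2) := by
        rw [fnnEval_sqNet hR ha (by simpa using hx), if_pos rfl, hsq, ← mul_sub,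
          abs_of_nonneg (by positivity)]
    _ ≤ a ^ 2 * 4 ^ (-(R : ℤ)) := by gcongr

/-- **Lemma (approximation of the square function)**: for any `R ∈ ℕ` and `a ≥ 1` there is
a ReLU network `f̂_sq ∈ F(R, 9)` whose weight vector `v` satisfies
`‖v‖_∞ = ‖v^{(R)}‖_∞ ≤ 4a²` and `‖v^{(0)}‖_∞ ≤ 1`, with `|f̂_sq(x) - x²| ≤ a² · 4^{-R}`
for all `x ∈ [-a, a]`. -/
theorem statement_17 (R : ℕ) (hR : 0 < R) (a : ℝ) (ha : 1 ≤ a) :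
    ∃ v : ℕ → ℕ → ℕ → ℝ,
      wsup (RelW 1 9 R) v = wsup (fun l i j => RelW 1 9 R l i j ∧ l = R) v ∧
      wsup (RelW 1 9 R) v ≤ 4 * a ^ 2 ∧
      wsup (fun l i j => RelW 1 9 R l i j ∧ l = 0) v ≤ 1 ∧
      ∀ x ∈ Set.Icc (-a) a,
        |fnnEval 1 9 R v (fun j => if j = 1 then x else 0) - x ^ 2|
          ≤ a ^ 2 * (4 : ℝ) ^ (-(R : ℤ)) := by
  have hout : ∀ j ≤ 9, RelW 1 9 R R 1 j := fun j hj => Or.inr ⟨rfl, rfl, by simpa [hR.ne'] using hj⟩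
  have hall : wsup (RelW 1 9 R) (sqNet R a) = a ^ 2 := wsup_sqNet hR.ne' ha hout
  have hlast : wsup (fun l i j => RelW 1 9 R l i j ∧ l = R) (sqNet R a) = a ^ 2 :=
    wsup_sqNet hR.ne' ha fun j hj => ⟨hout j hj, rfl⟩
  refine ⟨sqNet R a, hall.trans hlast.symm, by rw [hall]; nlinarith, ?_, fun x hx => ?_⟩
  · refine wsup_le zero_le_one fun l i j ⟨_, hl⟩ => ?_
    subst hl
    simpa [sqNet, hR.ne] using abs_sqLayer_le_one ha 0 i j
  · exact abs_fnnEval_sqNet_sub_sq_le hR.ne' (by linarith) (abs_le.mpr hx)
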